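/- Let a : ℕ → ℝ be a sequence such that the alternating series ∑_{n=0}^∞ (-1)^n a(n) converges to a real number S. Define the forward difference operator Δ on sequences by (Δ a)(k) = a(k+1) − a(k). Then the Euler-transformed series ∑_{n=0}^∞ (-1)^n (Δ^n a)(0) / 2^{n+1} also converges, and its sum equals S. -/

import Mathlib

/-!
With `P m = ∑_{n<m} (-1)^n a n`, the Newton expansion
`(-1)^n Δ^n a 0 = ∑_k C(n,k) (-1)^k a k` and Pascal's rule show that the `N`-th partial sum of
the Euler-transformed series is the binomial mean `2^{-N} ∑_{m ≤ N} C(N,m) P m`. Binomial means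
form a regular (Toeplitz) summation method: the weights are nonnegative, sum to `1`, and each
fixed weight `C(N,m) / 2^N` tends to `0`. Hence they preserve the limit `S`.
-/

/-- Forward difference operator: `(Δ a) k = a (k+1) - a k`. -/
def fwdDiffSeq (a : ℕ → ℝ) : ℕ → ℝ := fun k => a (k + 1) - a k

open Finset Filter Topology

theorem fwdDiffSeq_eq_fwdDiff : fwdDiffSeq = fwdDiff 1 := rfl

theorem neg_one_pow_mul_fwdDiff_iter {M R : Type*} [AddCommMonoid M] [CommRing R]
    (h : M) (f : M → R) (n : ℕ) (y : M) :
    (-1) ^ n * (fwdDiff h)^[n] f y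
      = ∑ k ∈ range (n + 1), n.choose k * ((-1) ^ k * f (y + k • h)) := by
  rw [fwdDiff_iter_eq_sum_shift, mul_sum]
  refine sum_congr rfl fun k hk => ?_
  obtain ⟨j, rfl⟩ := Nat.exists_eq_add_of_le (Nat.lt_succ_iff.mp (mem_range.mp hk))
  have hsign : (-1 : R) ^ (k + j) * (-1) ^ j = (-1) ^ k := by
    rw [pow_add, mul_assoc, ← pow_add, ← two_mul, pow_mul, neg_one_sq, one_pow, mul_one]
  rw [Nat.add_sub_cancel_left, zsmul_eq_mul]
  push_cast
  linear_combination ((k + j).choose k * f (y + k • h) : R) * hsign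

section WeightedMeans

variable {E : Type*} [NormedAddCommGroup E] [NormedSpace ℝ E] {w : ℕ → ℕ → ℝ} {s : ℕ → Finset ℕ}

theorem tendsto_sum_smul_zero_of_tendsto_weight_zero (hw_nonneg : ∀ N m, 0 ≤ w N m)
    (hw_sum : ∀ N, ∑ m ∈ s N, w N m ≤ 1) (hw : ∀ m, Tendsto (fun N => w N m) atTop (𝓝 0))
    {u : ℕ → E} (hu : Tendsto u atTop (𝓝 0)) :
    Tendsto (fun N => ∑ m ∈ s N, w N m • u m) atTop (𝓝 0) := by
  rw [Metric.tendsto_nhds]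
  intro ε hε
  have hu' := tendsto_zero_iff_norm_tendsto_zero.1 hu
  obtain ⟨C, hC⟩ := hu'.bddAbove_range
  have hC' : ∀ m, ‖u m‖ ≤ C := fun m => hC ⟨m, rfl⟩
  obtain ⟨K, hK⟩ := eventually_atTop.1 (hu'.eventually (gt_mem_nhds (half_pos hε)))
  have hhead : Tendsto (fun N => ∑ m ∈ range K, w N m * C) atTop (𝓝 0) := by
    simpa using tendsto_finsetSum (range K) fun m _ => (hw m).mul_const C
  filter_upwards [hhead.eventually (gt_mem_nhds (half_pos hε))] with N hN
  have hhead_le : ∑ m ∈ s N with m < K, w N m * ‖u m‖ ≤ ∑ m ∈ range K, w N m * C :=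
    (sum_le_sum fun m _ => mul_le_mul_of_nonneg_left (hC' m) (hw_nonneg N m)).trans <|
      sum_le_sum_of_subset_of_nonneg (fun m hm => by simpa using (mem_filter.1 hm).2)
        fun m _ _ => mul_nonneg (hw_nonneg N m) ((norm_nonneg _).trans (hC' m))
  have htail_le : ∑ m ∈ s N with ¬m < K, w N m * ‖u m‖ ≤ ε / 2 :=
    calc _ ≤ ∑ m ∈ s N with ¬m < K, w N m * (ε / 2) := sum_le_sum fun m hm =>
          mul_le_mul_of_nonneg_left (hK m (not_lt.1 (mem_filter.1 hm).2)).le (hw_nonneg N m)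
      _ ≤ (∑ m ∈ s N, w N m) * (ε / 2) := by
          rw [sum_mul]
          exact sum_le_sum_of_subset_of_nonneg (filter_subset _ _) fun m _ _ =>
            mul_nonneg (hw_nonneg N m) (half_pos hε).le
      _ ≤ ε / 2 := mul_le_of_le_one_left (half_pos hε).le (hw_sum N)
  rw [dist_zero_right]
  calc ‖∑ m ∈ s N, w N m • u m‖
      ≤ ∑ m ∈ s N, w N m * ‖u m‖ := norm_sum_le_of_le _ fun m _ => by
        rw [norm_smul, Real.norm_of_nonneg (hw_nonneg N m)]
    _ = ∑ m ∈ s N with m < K, w N m * ‖u m‖ + ∑ m ∈ s N with ¬m < K, w N m * ‖u m‖ :=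
        (sum_filter_add_sum_filter_not _ _ _).symm
    _ < ε / 2 + ε / 2 := add_lt_add_of_lt_of_le (hhead_le.trans_lt hN) htail_le
    _ = ε := add_halves ε

theorem Filter.Tendsto.sum_smul_of_tendsto_weight_zero (hw_nonneg : ∀ N m, 0 ≤ w N m)
    (hw_sum : ∀ N, ∑ m ∈ s N, w N m = 1) (hw : ∀ m, Tendsto (fun N => w N m) atTop (𝓝 0))
    {u : ℕ → E} {l : E} (hu : Tendsto u atTop (𝓝 l)) :
    Tendsto (fun N => ∑ m ∈ s N, w N m • u m) atTop (𝓝 l) := by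
  have h := tendsto_sum_smul_zero_of_tendsto_weight_zero hw_nonneg (fun N => (hw_sum N).le) hw
    (tendsto_sub_nhds_zero_iff.2 hu)
  rw [← zero_add l]
  refine (h.add_const l).congr fun N => ?_
  simp only [smul_sub, sum_sub_distrib, ← sum_smul, hw_sum, one_smul, sub_add_cancel]

end WeightedMeans

theorem tendsto_choose_div_two_pow (m : ℕ) :
    Tendsto (fun N : ℕ => (N.choose m : ℝ) / 2 ^ N) atTop (𝓝 0) := by
  refine squeeze_zero (fun N => by positivity) (fun N => ?_)
    (tendsto_pow_const_div_const_pow_of_one_lt m one_lt_two)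
  gcongr
  exact_mod_cast Nat.choose_le_pow N m

theorem Filter.Tendsto.binomial_mean {E : Type*} [NormedAddCommGroup E] [NormedSpace ℝ E]
    {u : ℕ → E} {l : E} (hu : Tendsto u atTop (𝓝 l)) :
    Tendsto (fun N => ∑ m ∈ range (N + 1), ((N.choose m : ℝ) / 2 ^ N) • u m) atTop (𝓝 l) :=
  hu.sum_smul_of_tendsto_weight_zero (fun _ _ => by positivity)
    (fun N => by
      rw [← sum_div, ← Nat.cast_sum, Nat.sum_range_choose, Nat.cast_pow, Nat.cast_two]
      exact div_self (by positivity)) tendsto_choose_div_two_pow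

theorem euler_partial_sum_eq_binomial_mean (a : ℕ → ℝ) (N : ℕ) :
    ∑ n ∈ range N, (-1 : ℝ) ^ n * (fwdDiffSeq^[n] a 0) / 2 ^ (n + 1)
      = ∑ m ∈ range (N + 1), ((N.choose m : ℝ) / 2 ^ N) •
          ∑ n ∈ range m, (-1 : ℝ) ^ n * a n := by
  simp only [smul_eq_mul, div_mul_eq_mul_div, ← sum_div]
  induction N with
  | zero => simp
  | succ N ih =>
    have hnewton : (-1) ^ N * fwdDiffSeq^[N] a 0
        = ∑ m ∈ range (N + 1), (N.choose m : ℝ) * ((-1) ^ m * a m) := by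
      simpa [fwdDiffSeq_eq_fwdDiff] using neg_one_pow_mul_fwdDiff_iter 1 a N 0
    have hshift : ∑ m ∈ range (N + 1), (N.choose m : ℝ) * ∑ n ∈ range (m + 1), (-1) ^ n * a n
        = ∑ m ∈ range (N + 1), (N.choose m : ℝ) * ∑ n ∈ range m, (-1) ^ n * a n
          + ∑ m ∈ range (N + 1), (N.choose m : ℝ) * ((-1) ^ m * a m) := by
      rw [← sum_add_distrib]
      exact sum_congr rfl fun m _ => by rw [sum_range_succ, mul_add]
    rw [sum_range_succ, ih, sum_choose_succ_mul (fun m _ => ∑ n ∈ range m, (-1 : ℝ) ^ n * a n),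
      hshift, ← hnewton]
    field_simp
    ring

theorem euler_transform (a : ℕ → ℝ) (S : ℝ)
    (h : Filter.Tendsto (fun N => ∑ n ∈ Finset.range N, (-1 : ℝ) ^ n * a n)
      Filter.atTop (nhds S)) :
    Filter.Tendsto (fun N => ∑ n ∈ Finset.range N, (-1 : ℝ) ^ n * (fwdDiffSeq^[n] a 0) / 2 ^ (n + 1))
      Filter.atTop (nhds S) := by
  rw [funext (euler_partial_sum_eq_binomial_mean a)]
  exact h.binomial_mean
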